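/- In the free algebra of terms with operations + , ⊞_π and · satisfying axioms A1–A5 and PA1–PA5, every closed term is provably equal to one in normal form s₁ ⊞_{π₁} ⋯ ⊞_{π_{k-1}} s_k where each s_i is a +-sum t₁ + ⋯ + t_l of terms t_j that are either atomic events or products u₁·u₂ with u₁ atomic. -/
import Mathlib


/-- Terms of BAPTC: atomic events, sequential composition `·`, alternative
composition `+`, and probabilistic choice `⊞_π`. -/
inductive PTerm (E : Type*) where
  | atom : E → PTerm E
  | seq : PTerm E → PTerm E → PTerm E
  | alt : PTerm E → PTerm E → PTerm E
  | pchoice : ℝ → PTerm E → PTerm E → PTerm E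

/-- All probabilistic choices in the term carry probabilities in `(0,1)`. -/
inductive ValidProbs {E : Type*} : PTerm E → Prop where
  | atom (e : E) : ValidProbs (PTerm.atom e)
  | seq {t s} : ValidProbs t → ValidProbs s → ValidProbs (PTerm.seq t s)
  | alt {t s} : ValidProbs t → ValidProbs s → ValidProbs (PTerm.alt t s)
  | pchoice {π : ℝ} {t s} : 0 < π → π < 1 → ValidProbs t → ValidProbs s →
      ValidProbs (PTerm.pchoice π t s)

/-- Provable equality in BAPTC: axioms A1–A5 and PA1–PA5 together with the
rules of equational logic. -/
inductive BapEq {E : Type*} : PTerm E → PTerm E → Prop where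
  | refl (t) : BapEq t t
  | symm {s t} : BapEq s t → BapEq t s
  | trans {s t u} : BapEq s t → BapEq t u → BapEq s u
  | seqCongr {a b c d} : BapEq a b → BapEq c d → BapEq (PTerm.seq a c) (PTerm.seq b d)
  | altCongr {a b c d} : BapEq a b → BapEq c d → BapEq (PTerm.alt a c) (PTerm.alt b d)
  | pchoiceCongr (π : ℝ) {a b c d} : BapEq a b → BapEq c d →
      BapEq (PTerm.pchoice π a c) (PTerm.pchoice π b d)
  | A1 (x y) : BapEq (PTerm.alt x y) (PTerm.alt y x)
  | A2 (x y z) : BapEq (PTerm.alt (PTerm.alt x y) z) (PTerm.alt x (PTerm.alt y z))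
  | A3 (x) : BapEq (PTerm.alt x x) x
  | A4 (x y z) : BapEq (PTerm.seq (PTerm.alt x y) z)
      (PTerm.alt (PTerm.seq x z) (PTerm.seq y z))
  | A5 (x y z) : BapEq (PTerm.seq (PTerm.seq x y) z) (PTerm.seq x (PTerm.seq y z))
  | PA1 (π : ℝ) (x y) (h0 : 0 < π) (h1 : π < 1) :
      BapEq (PTerm.pchoice π x y) (PTerm.pchoice (1 - π) y x)
  | PA2 (π ρ : ℝ) (x y z) (hπ0 : 0 < π) (hπ1 : π < 1) (hρ0 : 0 < ρ) (hρ1 : ρ < 1) :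
      BapEq (PTerm.pchoice π x (PTerm.pchoice ρ y z))
        (PTerm.pchoice (π + ρ - π * ρ)
          (PTerm.pchoice (π / (π + ρ - π * ρ)) x y) z)
  | PA3 (π : ℝ) (x) (h0 : 0 < π) (h1 : π < 1) : BapEq (PTerm.pchoice π x x) x
  | PA4 (π : ℝ) (x y z) (h0 : 0 < π) (h1 : π < 1) :
      BapEq (PTerm.seq (PTerm.pchoice π x y) z)
        (PTerm.pchoice π (PTerm.seq x z) (PTerm.seq y z))
  | PA5 (π : ℝ) (x y z) (h0 : 0 < π) (h1 : π < 1) :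
      BapEq (PTerm.alt (PTerm.pchoice π x y) z)
        (PTerm.pchoice π (PTerm.alt x z) (PTerm.alt y z))

universe u

mutual
/-- Summands: atomic events, or products `u₁ · u₂` with `u₁` atomic and `u₂`
in normal form. -/
inductive IsSummand {E : Type u} : PTerm E → Prop where
  | atom (e : E) : IsSummand (PTerm.atom e)
  | seq (e : E) {u : PTerm E} : IsNF u → IsSummand (PTerm.seq (PTerm.atom e) u)

/-- Sums `t₁ + ⋯ + t_l` of summands. -/
inductive IsSum {E : Type u} : PTerm E → Prop where
  | of {t : PTerm E} : IsSummand t → IsSum t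
  | add {t s : PTerm E} : IsSum t → IsSum s → IsSum (PTerm.alt t s)

/-- Normal forms `s₁ ⊞_{π₁} ⋯ ⊞_{π_{k-1}} s_k` where each `s_i` is a sum of
summands. -/
inductive IsNF {E : Type u} : PTerm E → Prop where
  | of {t : PTerm E} : IsSum t → IsNF t
  | pch (π : ℝ) {t s : PTerm E} : IsSum t → IsNF s → IsNF (PTerm.pchoice π t s)
end

namespace BaptcAux

variable {E : Type u}

/-- size of a term -/
def psize : PTerm E → ℕ
  | PTerm.atom _ => 1
  | PTerm.seq a b => psize a + psize b + 1
  | PTerm.alt a b => psize a + psize b + 1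
  | PTerm.pchoice _ a b => psize a + psize b + 1

lemma vp_seq {a b : PTerm E} (h : ValidProbs (PTerm.seq a b)) :
    ValidProbs a ∧ ValidProbs b := by cases h; exact ⟨‹_›, ‹_›⟩

lemma vp_alt {a b : PTerm E} (h : ValidProbs (PTerm.alt a b)) :
    ValidProbs a ∧ ValidProbs b := by cases h; exact ⟨‹_›, ‹_›⟩

lemma vp_pch {π : ℝ} {a b : PTerm E} (h : ValidProbs (PTerm.pchoice π a b)) :
    0 < π ∧ π < 1 ∧ ValidProbs a ∧ ValidProbs b := by
  cases h; exact ⟨‹_›, ‹_›, ‹_›, ‹_›⟩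

/-- result package -/
def Good (p : PTerm E) (q : PTerm E) : Prop :=
  IsNF q ∧ ValidProbs q ∧ BapEq p q

/-- `alt` of a sum and a normal form. -/
lemma alt_sum_nf : ∀ (n : ℕ) (t s : PTerm E), psize s ≤ n → IsSum t → ValidProbs t →
    IsNF s → ValidProbs s → ∃ q, Good (PTerm.alt t s) q := by
  intro n
  induction n with
  | zero => intro t s hn _ _ _ _; cases s <;> simp [psize] at hn
  | succ n ih =>
    intro t s hn ht vt hs vs
    cases hs with
    | of hsum =>
      exact ⟨PTerm.alt t s, IsNF.of (IsSum.add ht hsum), ValidProbs.alt vt vs,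
        BapEq.refl _⟩
    | pch ρ hs1 hs2 =>
      rename_i s1 s2
      obtain ⟨hρ0, hρ1, vs1, vs2⟩ := vp_pch vs
      have hsz : psize s2 ≤ n := by simp [psize] at hn; omega
      obtain ⟨q2, hq2nf, hq2v, hq2eq⟩ := ih t s2 hsz ht vt hs2 vs2
      refine ⟨PTerm.pchoice ρ (PTerm.alt s1 t) q2,
        IsNF.pch ρ (IsSum.add hs1 ht) hq2nf,
        ValidProbs.pchoice hρ0 hρ1 (ValidProbs.alt vs1 vt) hq2v, ?_⟩
      refine BapEq.trans (BapEq.A1 _ _)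
        (BapEq.trans (BapEq.PA5 ρ s1 s2 t hρ0 hρ1)
          (BapEq.pchoiceCongr ρ (BapEq.refl _)
            (BapEq.trans (BapEq.A1 _ _) hq2eq)))

/-- renormalize a probabilistic choice of two normal forms. -/
lemma pch_nf : ∀ (n : ℕ) (π : ℝ) (t s : PTerm E), psize t ≤ n →
    0 < π → π < 1 → IsNF t → ValidProbs t → IsNF s → ValidProbs s →
    ∃ q, Good (PTerm.pchoice π t s) q := by
  intro n
  induction n with
  | zero => intro π t s hn _ _ _ _ _ _; cases t <;> simp [psize] at hn
  | succ n ih =>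
    intro π t s hn hπ0 hπ1 ht vt hs vs
    cases ht with
    | of hsum =>
      exact ⟨PTerm.pchoice π t s, IsNF.pch π hsum hs,
        ValidProbs.pchoice hπ0 hπ1 vt vs, BapEq.refl _⟩
    | pch ρ ht1 ht2 =>
      rename_i t1 t2
      obtain ⟨hρ0, hρ1, vt1, vt2⟩ := vp_pch vt
      -- set π' = π*ρ, ρ' = π*(1-ρ)/(1-π*ρ)
      set π' : ℝ := π * ρ with hπ'
      set ρ' : ℝ := π * (1 - ρ) / (1 - π * ρ) with hρ'
      have hden : (0:ℝ) < 1 - π * ρ := by nlinarith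
      have hπ'0 : 0 < π' := mul_pos hπ0 hρ0
      have hπ'1 : π' < 1 := by nlinarith
      have hρ'0 : 0 < ρ' := div_pos (by nlinarith) hden
      have hρ'1 : ρ' < 1 := by
        rw [hρ', div_lt_one hden]; nlinarith
      have hsum' : π' + ρ' - π' * ρ' = π := by
        rw [hπ', hρ']; field_simp; ring
      have hdiv : π' / π = ρ := by
        rw [hπ', mul_comm, mul_div_assoc, div_self (ne_of_gt hπ0), mul_one]
      have hPA2 := BapEq.PA2 π' ρ' t1 t2 s hπ'0 hπ'1 hρ'0 hρ'1
      rw [hsum', hdiv] at hPA2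
      -- hPA2 : pch π' t1 (pch ρ' t2 s) = pch π (pch ρ t1 t2) s
      have hsz : psize t2 ≤ n := by simp [psize] at hn; omega
      obtain ⟨q2, hq2nf, hq2v, hq2eq⟩ :=
        ih ρ' t2 s hsz hρ'0 hρ'1 ht2 vt2 hs vs
      refine ⟨PTerm.pchoice π' t1 q2, IsNF.pch π' ht1 hq2nf,
        ValidProbs.pchoice hπ'0 hπ'1 vt1 hq2v, ?_⟩
      exact BapEq.trans (BapEq.symm hPA2)
        (BapEq.pchoiceCongr π' (BapEq.refl _) hq2eq)

/-- `alt` of two normal forms. -/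
lemma alt_nf : ∀ (n : ℕ) (t s : PTerm E), psize t ≤ n → IsNF t → ValidProbs t →
    IsNF s → ValidProbs s → ∃ q, Good (PTerm.alt t s) q := by
  intro n
  induction n with
  | zero => intro t s hn _ _ _ _; cases t <;> simp [psize] at hn
  | succ n ih =>
    intro t s hn ht vt hs vs
    cases ht with
    | of hsum => exact alt_sum_nf (psize s) t s le_rfl hsum vt hs vs
    | pch π ht1 ht2 =>
      rename_i t1 t2
      obtain ⟨hπ0, hπ1, vt1, vt2⟩ := vp_pch vt
      have hsz : psize t2 ≤ n := by simp [psize] at hn; omega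
      obtain ⟨q1, hq1nf, hq1v, hq1eq⟩ :=
        alt_sum_nf (psize s) t1 s le_rfl ht1 vt1 hs vs
      obtain ⟨q2, hq2nf, hq2v, hq2eq⟩ := ih t2 s hsz ht2 vt2 hs vs
      obtain ⟨q, hqnf, hqv, hqeq⟩ :=
        pch_nf (psize q1) π q1 q2 le_rfl hπ0 hπ1 hq1nf hq1v hq2nf hq2v
      refine ⟨q, hqnf, hqv, ?_⟩
      exact BapEq.trans (BapEq.PA5 π t1 t2 s hπ0 hπ1)
        (BapEq.trans (BapEq.pchoiceCongr π hq1eq hq2eq) hqeq)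

/-- `seq` of two normal forms. -/
lemma seq_nf : ∀ (n : ℕ) (t s : PTerm E), psize t ≤ n → IsNF t → ValidProbs t →
    IsNF s → ValidProbs s → ∃ q, Good (PTerm.seq t s) q := by
  intro n
  induction n with
  | zero => intro t s hn _ _ _ _; cases t <;> simp [psize] at hn
  | succ n ih =>
    intro t s hn ht vt hs vs
    cases ht with
    | of hsum =>
      cases hsum with
      | of hsmd =>
        cases hsmd with
        | atom e =>
          exact ⟨PTerm.seq (PTerm.atom e) s,
            IsNF.of (IsSum.of (IsSummand.seq e hs)),
            ValidProbs.seq (ValidProbs.atom e) vs, BapEq.refl _⟩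
        | seq e hu =>
          rename_i u
          obtain ⟨_, vu⟩ := vp_seq vt
          have hsz : psize u ≤ n := by simp [psize] at hn; omega
          obtain ⟨q, hqnf, hqv, hqeq⟩ := ih u s hsz hu vu hs vs
          refine ⟨PTerm.seq (PTerm.atom e) q,
            IsNF.of (IsSum.of (IsSummand.seq e hqnf)),
            ValidProbs.seq (ValidProbs.atom e) hqv, ?_⟩
          exact BapEq.trans (BapEq.A5 _ _ _)
            (BapEq.seqCongr (BapEq.refl _) hqeq)
      | add ht1 ht2 =>
        rename_i t1 t2
        obtain ⟨vt1, vt2⟩ := vp_alt vt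
        have hsz1 : psize t1 ≤ n := by simp [psize] at hn; omega
        have hsz2 : psize t2 ≤ n := by simp [psize] at hn; omega
        obtain ⟨q1, hq1nf, hq1v, hq1eq⟩ :=
          ih t1 s hsz1 (IsNF.of ht1) vt1 hs vs
        obtain ⟨q2, hq2nf, hq2v, hq2eq⟩ :=
          ih t2 s hsz2 (IsNF.of ht2) vt2 hs vs
        obtain ⟨q, hqnf, hqv, hqeq⟩ :=
          alt_nf (psize q1) q1 q2 le_rfl hq1nf hq1v hq2nf hq2v
        refine ⟨q, hqnf, hqv, ?_⟩
        exact BapEq.trans (BapEq.A4 t1 t2 s)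
          (BapEq.trans (BapEq.altCongr hq1eq hq2eq) hqeq)
    | pch π ht1 ht2 =>
      rename_i t1 t2
      obtain ⟨hπ0, hπ1, vt1, vt2⟩ := vp_pch vt
      have hsz1 : psize t1 ≤ n := by simp [psize] at hn; omega
      have hsz2 : psize t2 ≤ n := by simp [psize] at hn; omega
      obtain ⟨q1, hq1nf, hq1v, hq1eq⟩ :=
        ih t1 s hsz1 (IsNF.of ht1) vt1 hs vs
      obtain ⟨q2, hq2nf, hq2v, hq2eq⟩ := ih t2 s hsz2 ht2 vt2 hs vs
      obtain ⟨q, hqnf, hqv, hqeq⟩ :=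
        pch_nf (psize q1) π q1 q2 le_rfl hπ0 hπ1 hq1nf hq1v hq2nf hq2v
      refine ⟨q, hqnf, hqv, ?_⟩
      exact BapEq.trans (BapEq.PA4 π t1 t2 s hπ0 hπ1)
        (BapEq.trans (BapEq.pchoiceCongr π hq1eq hq2eq) hqeq)

/-- main induction -/
lemma main : ∀ (p : PTerm E), ValidProbs p → ∃ q, Good p q := by
  intro p
  induction p with
  | atom e =>
    intro _
    exact ⟨PTerm.atom e, IsNF.of (IsSum.of (IsSummand.atom e)),
      ValidProbs.atom e, BapEq.refl _⟩
  | seq a b iha ihb =>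
    intro hp
    obtain ⟨va, vb⟩ := vp_seq hp
    obtain ⟨qa, hanf, hav, haeq⟩ := iha va
    obtain ⟨qb, hbnf, hbv, hbeq⟩ := ihb vb
    obtain ⟨q, hqnf, hqv, hqeq⟩ :=
      seq_nf (psize qa) qa qb le_rfl hanf hav hbnf hbv
    exact ⟨q, hqnf, hqv, BapEq.trans (BapEq.seqCongr haeq hbeq) hqeq⟩
  | alt a b iha ihb =>
    intro hp
    obtain ⟨va, vb⟩ := vp_alt hp
    obtain ⟨qa, hanf, hav, haeq⟩ := iha va
    obtain ⟨qb, hbnf, hbv, hbeq⟩ := ihb vb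
    obtain ⟨q, hqnf, hqv, hqeq⟩ :=
      alt_nf (psize qa) qa qb le_rfl hanf hav hbnf hbv
    exact ⟨q, hqnf, hqv, BapEq.trans (BapEq.altCongr haeq hbeq) hqeq⟩
  | pchoice π a b iha ihb =>
    intro hp
    obtain ⟨hπ0, hπ1, va, vb⟩ := vp_pch hp
    obtain ⟨qa, hanf, hav, haeq⟩ := iha va
    obtain ⟨qb, hbnf, hbv, hbeq⟩ := ihb vb
    obtain ⟨q, hqnf, hqv, hqeq⟩ :=
      pch_nf (psize qa) π qa qb le_rfl hπ0 hπ1 hanf hav hbnf hbv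
    exact ⟨q, hqnf, hqv,
      BapEq.trans (BapEq.pchoiceCongr π haeq hbeq) hqeq⟩

end BaptcAux

/-- Elimination theorem of BAPTC: every closed term (with probabilities in
`(0,1)`) is provably equal to a term in normal form. -/
theorem baptc_elimination {E : Type*} (p : PTerm E) (hp : ValidProbs p) :
    ∃ q : PTerm E, IsNF q ∧ BapEq p q := by
  obtain ⟨q, hnf, _, heq⟩ := BaptcAux.main p hp
  exact ⟨q, hnf, heq⟩
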